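/- arXiv:2112.05040 — 4 statements merged into one kernel-verified Lean document; each statement's English description precedes it below -/
import Mathlib

section
/- Let Ω ⊆ ℝ⁴ be open (with coordinates (z, z₁, y, y₁)), let f_{ij} : Ω → ℝ (1 ≤ i ≤ 3, j = 1,2) and F, G : Ω → ℝ be smooth, and let δ = ±1. Then the following are equivalent. (A) On Ω: (14) ∂_z f_{i1} = ∂_y f_{i1} = ∂_{z₁} f_{i2} = ∂_{y₁} f_{i2} = 0 for i = 1,2,3; (15) (f_{11,z₁}f_{21,y₁} − f_{11,y₁}f_{21,z₁})² + (f_{21,z₁}f_{31,y₁} − f_{21,y₁}f_{31,z₁})² + (f_{11,z₁}f_{31,y₁} − f_{11,y₁}f_{31,z₁})² ≠ 0; (16) −f_{11,z₁}F − f_{11,y₁}G + f_{12,z}z₁ + f_{12,y}y₁ − f_{31}f_{22} + f_{32}f_{21} = 0; (17) −f_{21,z₁}F − f_{21,y₁}G + f_{22,z}z₁ + f_{22,y}y₁ − f_{11}f_{32} + f_{12}f_{31} = 0; (18) −f_{31,z₁}F − f_{31,y₁}G + f_{32,z}z₁ + f_{32,y}y₁ − δ(f_{11}f_{22} − f_{12}f_{21})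 = 0; (19) f_{11}f_{22} − f_{12}f_{21} ≠ 0. (B) f_{11}f_{22} − f_{12}f_{21} ≠ 0 on Ω, and for every point (z, z₁, y, y₁) ∈ Ω and all real values of the formal jet variables z_t, y_t, z_{1,x}, y_{1,x}, z_{1,t}, y_{1,t}, the three structure equations −D_t f_{i1} + D_x f_{i2} = R_i (i = 1,2,3), where D_t f = f_z z_t + f_{z₁} z_{1,t} + f_y y_t + f_{y₁} y_{1,t}, D_xف f = f_z z₁ + f_{z₁} z_{1,x} + f_y y₁ + f_{y₁} y_{1,x}, R₁ = f_{31}f_{22} − f_{32}f_{21}, R₂ = f_{11}f_{32} − f_{12}f_{31}, R₃ = δ(f_{11}f_{22} − f_{12}f_{21}), hold if and only if z_{1,t} = F(z, z₁, y, y₁) and y_{1,t} = G(z, z₁, y, y₁). (Condition (B) expresses that the hyperbolic system z_{1,t} = F, y_{1,t} = G, i.e. u_{xt} = F(u,u_x,v,v_x), v_{xt} = G(u,u_x,v,v_x), describes pseudospherical surfaces when δ = 1, resp. spherical surfaces when δ = −1, with associated functions f_{ij}.) -/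
/-- Partial derivative with respect to `z` (the first coordinate of `(z, z₁, y, y₁)`). -/
noncomputable def Dz (f : ℝ × ℝ × ℝ × ℝ → ℝ) (p : ℝ × ℝ × ℝ × ℝ) : ℝ :=
  fderiv ℝ f p (1, 0, 0, 0)

/-- Partial derivative with respect to `z₁`. -/
noncomputable def Dz1 (f : ℝ × ℝ × ℝ × ℝ → ℝ) (p : ℝ × ℝ × ℝ × ℝ) : ℝ :=
  fderiv ℝ f p (0, 1, 0, 0)

/-- Partial derivative with respect to `y`. -/
noncomputable def Dy (f : ℝ × ℝ × ℝ × ℝ → ℝ) (p : ℝ × ℝ × ℝ × ℝ) : ℝ :=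
  fderiv ℝ f p (0, 0, 1, 0)

/-- Partial derivative with respect to `y₁`. -/
noncomputable def Dy1 (f : ℝ × ℝ × ℝ × ℝ → ℝ) (p : ℝ × ℝ × ℝ × ℝ) : ℝ :=
  fderiv ℝ f p (0, 0, 0, 1)

/-- If all three 2×2 minors of the 3×2 matrix with rows `(B i, D i)` vanish, there is a
nonzero vector `(s, t)` in the common kernel of all rows. -/
lemma exists_kernel_vec (B1 D1 B2 D2 B3 D3 : ℝ)
    (h12 : B1 * D2 - D1 * B2 = 0) (h23 : B2 * D3 - D2 * B3 = 0)
    (h13 : B1 * D3 - D1 * B3 = 0) :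
    ∃ s t : ℝ, ¬(s = 0 ∧ t = 0) ∧ B1 * s + D1 * t = 0 ∧ B2 * s + D2 * t = 0 ∧
      B3 * s + D3 * t = 0 := by
  by_cases hr1 : B1 = 0 ∧ D1 = 0
  · by_cases hr2 : B2 = 0 ∧ D2 = 0
    · by_cases hr3 : B3 = 0 ∧ D3 = 0
      · exact ⟨1, 0, by norm_num, by rw [hr1.1, hr1.2]; ring,
          by rw [hr2.1, hr2.2]; ring, by rw [hr3.1, hr3.2]; ring⟩
      · refine ⟨-D3, B3, fun h => hr3 ⟨h.2, by linarith [h.1]⟩,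
          by rw [hr1.1, hr1.2]; ring, by rw [hr2.1, hr2.2]; ring, by ring⟩
    · refine ⟨-D2, B2, fun h => hr2 ⟨h.2, by linarith [h.1]⟩,
        by rw [hr1.1, hr1.2]; ring, by ring, by linear_combination h23⟩
  · refine ⟨-D1, B1, fun h => hr1 ⟨h.2, by linarith [h.1]⟩,
      by ring, by linear_combination h12, by linear_combination h13⟩

set_option maxHeartbeats 1000000 in
/-- The pointwise algebraic core of the characterization theorem. -/
lemma key_pointwise (δ F G z1 y1 u11 u12 u21 u22 u31 u32
    A1 B1 C1 D1 E1 H1 J1 K1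
    A2 B2 C2 D2 E2 H2 J2 K2
    A3 B3 C3 D3 E3 H3 J3 K3 : ℝ) :
    ((A1 = 0 ∧ C1 = 0 ∧ A2 = 0 ∧ C2 = 0 ∧ A3 = 0 ∧ C3 = 0 ∧
      H1 = 0 ∧ K1 = 0 ∧ H2 = 0 ∧ K2 = 0 ∧ H3 = 0 ∧ K3 = 0) ∧
     ((B1 * D2 - D1 * B2) ^ 2 + (B2 * D3 - D2 * B3) ^ 2 +
      (B1 * D3 - D1 * B3) ^ 2 ≠ 0) ∧
     (-(B1) * F - D1 * G + E1 * z1 + J1 * y1 - u31 * u22 + u32 * u21 = 0) ∧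
     (-(B2) * F - D2 * G + E2 * z1 + J2 * y1 - u11 * u32 + u12 * u31 = 0) ∧
     (-(B3) * F - D3 * G + E3 * z1 + J3 * y1 - δ * (u11 * u22 - u12 * u21) = 0))
    ↔
    (∀ zt yt z1x y1x z1t y1t : ℝ,
      ((-(A1 * zt + B1 * z1t + C1 * yt + D1 * y1t)
          + (E1 * z1 + H1 * z1x + J1 * y1 + K1 * y1x) = u31 * u22 - u32 * u21) ∧
       (-(A2 * zt + B2 * z1t + C2 * yt + D2 * y1t)
          + (E2 * z1 + H2 * z1x + J2 * y1 + K2 * y1x) = u11 * u32 - u12 * u31) ∧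
       (-(A3 * zt + B3 * z1t + C3 * yt + D3 * y1t)
          + (E3 * z1 + H3 * z1x + J3 * y1 + K3 * y1x) = δ * (u11 * u22 - u12 * u21)))
      ↔ (z1t = F ∧ y1t = G)) := by
  constructor
  · rintro ⟨⟨hA1, hC1, hA2, hC2, hA3, hC3, hH1, hK1, hH2, hK2, hH3, hK3⟩,
      hm, he1, he2, he3⟩
    intro zt yt z1x y1x z1t y1t
    constructor
    · rintro ⟨e1, e2, e3⟩
      have k1 : B1 * (z1t - F) + D1 * (y1t - G) = 0 := by
        subst hA1 hC1 hH1 hK1; linear_combination he1 - e1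
      have k2 : B2 * (z1t - F) + D2 * (y1t - G) = 0 := by
        subst hA2 hC2 hH2 hK2; linear_combination he2 - e2
      have k3 : B3 * (z1t - F) + D3 * (y1t - G) = 0 := by
        subst hA3 hC3 hH3 hK3; linear_combination he3 - e3
      have hcase : B1 * D2 - D1 * B2 ≠ 0 ∨ B2 * D3 - D2 * B3 ≠ 0 ∨
          B1 * D3 - D1 * B3 ≠ 0 := by
        by_contra h
        push_neg at h
        exact hm (by rw [h.1, h.2.1, h.2.2]; ring)
      have solve : ∀ Bi Di Bj Dj : ℝ, Bi * Dj - Di * Bj ≠ 0 →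
          Bi * (z1t - F) + Di * (y1t - G) = 0 →
          Bj * (z1t - F) + Dj * (y1t - G) = 0 → z1t = F ∧ y1t = G := by
        intro Bi Di Bj Dj hne ki kj
        have hs : (z1t - F) * (Bi * Dj - Di * Bj) = 0 := by
          linear_combination Dj * ki - Di * kj
        have ht : (y1t - G) * (Bi * Dj - Di * Bj) = 0 := by
          linear_combination Bi * kj - Bj * ki
        constructor
        · rcases mul_eq_zero.mp hs with h | h
          · linarith
          · exact absurd h hne
        · rcases mul_eq_zero.mp ht with h | h
          · linarith
          · exact absurd h hne
      rcases hcase with h | h | h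
      · exact solve B1 D1 B2 D2 h k1 k2
      · exact solve B2 D2 B3 D3 h k2 k3
      · exact solve B1 D1 B3 D3 h k1 k3
    · rintro ⟨rfl, rfl⟩
      subst hA1 hC1 hH1 hK1 hA2 hC2 hH2 hK2 hA3 hC3 hH3 hK3
      exact ⟨by linear_combination he1, by linear_combination he2,
        by linear_combination he3⟩
  · intro h
    have e0 := (h 0 0 0 0 F G).mpr ⟨rfl, rfl⟩
    have ez := (h 1 0 0 0 F G).mpr ⟨rfl, rfl⟩
    have ey := (h 0 1 0 0 F G).mpr ⟨rfl, rfl⟩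
    have ex := (h 0 0 1 0 F G).mpr ⟨rfl, rfl⟩
    have ew := (h 0 0 0 1 F G).mpr ⟨rfl, rfl⟩
    refine ⟨⟨by linear_combination e0.1 - ez.1, by linear_combination e0.1 - ey.1,
        by linear_combination e0.2.1 - ez.2.1, by linear_combination e0.2.1 - ey.2.1,
        by linear_combination e0.2.2 - ez.2.2, by linear_combination e0.2.2 - ey.2.2,
        by linear_combination ex.1 - e0.1, by linear_combination ew.1 - e0.1,
        by linear_combination ex.2.1 - e0.2.1, by linear_combination ew.2.1 - e0.2.1,
        by linear_combination ex.2.2 - e0.2.2, by linear_combination ew.2.2 - e0.2.2⟩,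
      ?_, by linear_combination e0.1, by linear_combination e0.2.1,
      by linear_combination e0.2.2⟩
    intro hsum
    have sq1 : (B1 * D2 - D1 * B2) ^ 2 = 0 := by
      linarith [hsum, sq_nonneg (B1 * D2 - D1 * B2), sq_nonneg (B2 * D3 - D2 * B3),
        sq_nonneg (B1 * D3 - D1 * B3)]
    have sq2 : (B2 * D3 - D2 * B3) ^ 2 = 0 := by
      linarith [hsum, sq_nonneg (B1 * D2 - D1 * B2), sq_nonneg (B2 * D3 - D2 * B3),
        sq_nonneg (B1 * D3 - D1 * B3)]
    have sq3 : (B1 * D3 - D1 * B3) ^ 2 = 0 := by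
      linarith [hsum, sq_nonneg (B1 * D2 - D1 * B2), sq_nonneg (B2 * D3 - D2 * B3),
        sq_nonneg (B1 * D3 - D1 * B3)]
    obtain ⟨s, t, hst, k1, k2, k3⟩ := exists_kernel_vec B1 D1 B2 D2 B3 D3
      (sq_eq_zero_iff.mp sq1)
      (sq_eq_zero_iff.mp sq2)
      (sq_eq_zero_iff.mp sq3)
    have := (h 0 0 0 0 (F + s) (G + t)).mp
      ⟨by linear_combination e0.1 - k1, by linear_combination e0.2.1 - k2,
        by linear_combination e0.2.2 - k3⟩
    exact hst ⟨by linarith [this.1], by linarith [this.2]⟩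

/-- **Characterization theorem** (Theorem 3.10 of Kelmer–Tenenblat).
For a system `u_xt = F(u, u_x, v, v_x)`, `v_xt = G(u, u_x, v, v_x)` and smooth functions
`f_ij(z, z₁, y, y₁)` on an open set `Ω ⊆ ℝ⁴` (with `(z, z₁, y, y₁) = (u, u_x, v, v_x)`),
conditions (14)–(19) hold on `Ω` if and only if `f₁₁f₂₂ − f₁₂f₂₁ ≠ 0` on `Ω` and,
for every point of `Ω` and all real values of the formal jet variables
`z_t, y_t, z_{1,x}, y_{1,x}, z_{1,t}, y_{1,t}`, the three structure equations
`−D_t f_{i1} + D_x f_{i2} = R_i` hold iff `z_{1,t} = F` and `y_{1,t} = G`;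
that is, the system describes pseudospherical surfaces (`δ = 1`),
resp. spherical surfaces (`δ = −1`), with associated functions `f_ij`. -/
theorem characterization_of_systems_describing_pss_or_ss
    (δ : ℝ) (hδ : δ = 1 ∨ δ = -1)
    (Ω : Set (ℝ × ℝ × ℝ × ℝ)) (hΩ : IsOpen Ω)
    (f11 f12 f21 f22 f31 f32 F G : ℝ × ℝ × ℝ × ℝ → ℝ)
    (h11 : ContDiffOn ℝ (⊤ : ℕ∞) f11 Ω) (h12 : ContDiffOn ℝ (⊤ : ℕ∞) f12 Ω)
    (h21 : ContDiffOn ℝ (⊤ : ℕ∞) f21 Ω) (h22 : ContDiffOn ℝ (⊤ : ℕ∞) f22 Ω)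
    (h31 : ContDiffOn ℝ (⊤ : ℕ∞) f31 Ω) (h32 : ContDiffOn ℝ (⊤ : ℕ∞) f32 Ω)
    (hF : ContDiffOn ℝ (⊤ : ℕ∞) F Ω) (hG : ContDiffOn ℝ (⊤ : ℕ∞) G Ω) :
    -- (A): conditions (14)–(19) hold on Ω
    (∀ p ∈ Ω,
      -- (14)
      (Dz f11 p = 0 ∧ Dy f11 p = 0 ∧ Dz f21 p = 0 ∧ Dy f21 p = 0 ∧
       Dz f31 p = 0 ∧ Dy f31 p = 0 ∧
       Dz1 f12 p = 0 ∧ Dy1 f12 p = 0 ∧ Dz1 f22 p = 0 ∧ Dy1 f22 p = 0 ∧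
       Dz1 f32 p = 0 ∧ Dy1 f32 p = 0) ∧
      -- (15)
      ((Dz1 f11 p * Dy1 f21 p - Dy1 f11 p * Dz1 f21 p) ^ 2 +
       (Dz1 f21 p * Dy1 f31 p - Dy1 f21 p * Dz1 f31 p) ^ 2 +
       (Dz1 f11 p * Dy1 f31 p - Dy1 f11 p * Dz1 f31 p) ^ 2 ≠ 0) ∧
      -- (16)
      (-(Dz1 f11 p) * F p - Dy1 f11 p * G p + Dz f12 p * p.2.1 + Dy f12 p * p.2.2.2
        - f31 p * f22 p + f32 p * f21 p = 0) ∧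
      -- (17)
      (-(Dz1 f21 p) * F p - Dy1 f21 p * G p + Dz f22 p * p.2.1 + Dy f22 p * p.2.2.2
        - f11 p * f32 p + f12 p * f31 p = 0) ∧
      -- (18)
      (-(Dz1 f31 p) * F p - Dy1 f31 p * G p + Dz f32 p * p.2.1 + Dy f32 p * p.2.2.2
        - δ * (f11 p * f22 p - f12 p * f21 p) = 0) ∧
      -- (19)
      (f11 p * f22 p - f12 p * f21 p ≠ 0))
    ↔
    -- (B): ω₁ ∧ ω₂ ≠ 0 and the structure equations hold, at the level of formal jets,
    -- exactly on solutions of the system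
    ((∀ p ∈ Ω, f11 p * f22 p - f12 p * f21 p ≠ 0) ∧
     ∀ p ∈ Ω, ∀ zt yt z1x y1x z1t y1t : ℝ,
      ((-(Dz f11 p * zt + Dz1 f11 p * z1t + Dy f11 p * yt + Dy1 f11 p * y1t)
          + (Dz f12 p * p.2.1 + Dz1 f12 p * z1x + Dy f12 p * p.2.2.2 + Dy1 f12 p * y1x)
          = f31 p * f22 p - f32 p * f21 p) ∧
       (-(Dz f21 p * zt + Dz1 f21 p * z1t + Dy f21 p * yt + Dy1 f21 p * y1t)
          + (Dz f22 p * p.2.1 + Dz1 f22 p * z1x + Dy f22 p * p.2.2.2 + Dy1 f22 p * y1x)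
          = f11 p * f32 p - f12 p * f31 p) ∧
       (-(Dz f31 p * zt + Dz1 f31 p * z1t + Dy f31 p * yt + Dy1 f31 p * y1t)
          + (Dz f32 p * p.2.1 + Dz1 f32 p * z1x + Dy f32 p * p.2.2.2 + Dy1 f32 p * y1x)
          = δ * (f11 p * f22 p - f12 p * f21 p)))
      ↔ (z1t = F p ∧ y1t = G p)) := by
  constructor
  · intro hA
    refine ⟨fun p hp => (hA p hp).2.2.2.2.2, fun p hp => ?_⟩
    exact (key_pointwise δ (F p) (G p) p.2.1 p.2.2.2
      (f11 p) (f12 p) (f21 p) (f22 p) (f31 p) (f32 p)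
      (Dz f11 p) (Dz1 f11 p) (Dy f11 p) (Dy1 f11 p)
      (Dz f12 p) (Dz1 f12 p) (Dy f12 p) (Dy1 f12 p)
      (Dz f21 p) (Dz1 f21 p) (Dy f21 p) (Dy1 f21 p)
      (Dz f22 p) (Dz1 f22 p) (Dy f22 p) (Dy1 f22 p)
      (Dz f31 p) (Dz1 f31 p) (Dy f31 p) (Dy1 f31 p)
      (Dz f32 p) (Dz1 f32 p) (Dy f32 p) (Dy1 f32 p)).mp
      ⟨(hA p hp).1, (hA p hp).2.1, (hA p hp).2.2.1, (hA p hp).2.2.2.1,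
        (hA p hp).2.2.2.2.1⟩
  · rintro ⟨hdet, hB⟩ p hp
    have h := (key_pointwise δ (F p) (G p) p.2.1 p.2.2.2
      (f11 p) (f12 p) (f21 p) (f22 p) (f31 p) (f32 p)
      (Dz f11 p) (Dz1 f11 p) (Dy f11 p) (Dy1 f11 p)
      (Dz f12 p) (Dz1 f12 p) (Dy f12 p) (Dy1 f12 p)
      (Dz f21 p) (Dz1 f21 p) (Dy f21 p) (Dy1 f21 p)
      (Dz f22 p) (Dz1 f22 p) (Dy f22 p) (Dy1 f22 p)
      (Dz f31 p) (Dz1 f31 p) (Dy f31 p) (Dy1 f31 p)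
      (Dz f32 p) (Dz1 f32 p) (Dy f32 p) (Dy1 f32 p)).mpr (hB p hp)
    exact ⟨h.1, h.2.1, h.2.2.1, h.2.2.2.1, h.2.2.2.2, hdet p hp⟩
end

section
/- Let η ∈ ℝ and let u, v : U → ℝ be smooth functions on an open set U ⊆ ℝ² satisfying the nonlinear Schrödinger system u_t + v_{xx} − 2(u² + v²)v = 0, −v_t + u_{xx} − 2(u² + v²)u = 0 on U. Define F₁₁ = 2u, F₂₁ = −2v, F₃₁ = 2η, F₁₂ = −4ηu − 2v_x, F₂₂ = 4ηv − 2u_x, F₃₂ = −4η² − 2(u² + v²) (all functions of (x,t) through u, v and their derivatives). Then on U the structure equations with δ = 1 hold: −∂_t F₁₁ + ∂_x F₁₂ = F₃₁F₂₂ − F₃₂F₂₁, −∂_t F₂₁ + ∂_x F₂₂ = F₁₁F₃₂ − F₁₂F₃₁, −∂_t F₃₁ + ∂_x F₃₂ = F₁₁F₂₂ − F₁₂F₂₁; hence the NLS⁻ system describes pseudospherical surfaces with these associated functions. -/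
/-!
Once each partial derivative is expanded by the product and chain rules, the first two
structure equations are `-2` times the two NLS⁻ equations, and the third holds identically:
both sides equal `-4 (u uₓ + v vₓ)`.
-/

open Real

/-- Partial derivative in the `x` direction of a function on the `(x, t)` plane. -/
noncomputable def pdx (f : ℝ × ℝ → ℝ) (p : ℝ × ℝ) : ℝ := fderiv ℝ f p (1, 0)

/-- Partial derivative in the `t` direction of a function on the `(x, t)` plane. -/
noncomputable def pdt (f : ℝ × ℝ → ℝ) (p : ℝ × ℝ) : ℝ := fderiv ℝ f p (0, 1)

/-- The structure equations of a surface of constant Gaussian curvature `-δ`: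
`−∂ₜF₁₁ + ∂ₓF₁₂ = F₃₁F₂₂ − F₃₂F₂₁`, `−∂ₜF₂₁ + ∂ₓF₂₂ = F₁₁F₃₂ − F₁₂F₃₁`,
`−∂ₜF₃₁ + ∂ₓF₃₂ = δ(F₁₁F₂₂ − F₁₂F₂₁)` on `U`. -/
def StructEqs (δ : ℝ) (U : Set (ℝ × ℝ)) (F11 F12 F21 F22 F31 F32 : ℝ × ℝ → ℝ) : Prop :=
  ∀ p ∈ U,
    -(pdt F11 p) + pdx F12 p = F31 p * F22 p - F32 p * F21 p ∧
    -(pdt F21 p) + pdx F22 p = F11 p * F32 p - F12 p * F31 p ∧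
    -(pdt F31 p) + pdx F32 p = δ * (F11 p * F22 p - F12 p * F21 p)

section DirectionalDerivatives

variable {E : Type*} [NormedAddCommGroup E] [NormedSpace ℝ E] {f g : E → ℝ} {p : E}

lemma fderiv_const_mul_sub_const_mul_apply (hf : DifferentiableAt ℝ f p)
    (hg : DifferentiableAt ℝ g p) (a b : ℝ) (w : E) :
    fderiv ℝ (fun q => a * f q - b * g q) p w = a * fderiv ℝ f p w - b * fderiv ℝ g p w := by
  rw [fderiv_fun_sub (hf.const_mul a) (hg.const_mul b), fderiv_const_mul hf,
    fderiv_const_mul hg]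
  rfl

lemma fderiv_const_sub_two_mul_sq_add_sq_apply (hf : DifferentiableAt ℝ f p)
    (hg : DifferentiableAt ℝ g p) (c : ℝ) (w : E) :
    fderiv ℝ (fun q => c - 2 * (f q ^ 2 + g q ^ 2)) p w
      = -4 * (f p * fderiv ℝ f p w + g p * fderiv ℝ g p w) := by
  rw [fderiv_const_sub, fderiv_const_mul ((hf.fun_pow 2).fun_add (hg.fun_pow 2)),
    fderiv_fun_add (hf.fun_pow 2) (hg.fun_pow 2), fderiv_fun_pow 2 hf, fderiv_fun_pow 2 hg]
  simp only [neg_apply, smul_apply, add_apply, smul_eq_mul, nsmul_eq_mul]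
  ring

end DirectionalDerivatives

lemma ContDiffOn.fderiv_apply_of_isOpen {𝕜 E F : Type*} [NontriviallyNormedField 𝕜]
    [NormedAddCommGroup E] [NormedSpace 𝕜 E] [NormedAddCommGroup F] [NormedSpace 𝕜 F]
    {f : E → F} {U : Set E} {m n : WithTop ℕ∞} (hf : ContDiffOn 𝕜 n f U) (hU : IsOpen U)
    (hmn : m + 1 ≤ n) (w : E) : ContDiffOn 𝕜 m (fun q => fderiv 𝕜 f q w) U :=
  (hf.fderiv_of_isOpen hU hmn).clm_apply contDiffOn_const

/-- The NLS⁻ system `u_t + v_xx − 2(u² + v²)v = 0`, `−v_t + u_xx − 2(u² + v²)u = 0`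
describes pseudospherical surfaces (`δ = 1`). -/
theorem nls_minus_describes_pss (η : ℝ) (U : Set (ℝ × ℝ)) (hU : IsOpen U)
    (u v : ℝ × ℝ → ℝ)
    (hu : ContDiffOn ℝ (⊤ : ℕ∞) u U) (hv : ContDiffOn ℝ (⊤ : ℕ∞) v U)
    (heq1 : ∀ p ∈ U, pdt u p + pdx (pdx v) p - 2 * (u p ^ 2 + v p ^ 2) * v p = 0)
    (heq2 : ∀ p ∈ U, -(pdt v p) + pdx (pdx u) p - 2 * (u p ^ 2 + v p ^ 2) * u p = 0) :
    StructEqs 1 U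
      (fun q => 2 * u q)
      (fun q => -4 * η * u q - 2 * pdx v q)
      (fun q => -2 * v q)
      (fun q => 4 * η * v q - 2 * pdx u q)
      (fun _ => 2 * η)
      (fun q => -4 * η ^ 2 - 2 * (u q ^ 2 + v q ^ 2)) := by
  intro p hp
  have differentiableAt {f : ℝ × ℝ → ℝ} (hf : ContDiffOn ℝ (⊤ : ℕ∞) f U) : DifferentiableAt ℝ f p :=
    (hf.differentiableOn (by simp)).differentiableAt (hU.mem_nhds hp)
  have hu' := differentiableAt hu
  have hv' := differentiableAt hv
  have hux := differentiableAt (hu.fderiv_apply_of_isOpen hU le_rfl (1, 0))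
  have hvx := differentiableAt (hv.fderiv_apply_of_isOpen hU le_rfl (1, 0))
  unfold pdt pdx at heq1 heq2 ⊢
  rw [fderiv_const_mul hu', fderiv_const_mul hv', fderiv_const_mul_sub_const_mul_apply hu' hvx,
    fderiv_const_mul_sub_const_mul_apply hv' hux, fderiv_const_sub_two_mul_sq_add_sq_apply hu' hv',
    fderiv_const_apply]
  simp only [smul_apply, smul_eq_mul, zero_apply]
  exact ⟨by linear_combination -2 * heq1 p hp, by linear_combination -2 * heq2 p hp, by ring⟩
end

section
/- Let η ∈ ℝ, η ≠ 0, and let u, v : U → ℝ be smooth functions on an open set U ⊆ ℝ² satisfying the Pohlmeyer–Lund–Regge type system u_{xt} = 2uv·u_x − u, v_{xt} = −2uv·v_x − v on U. Define F₁₁ = η(u_x + v_x), F₂₁ = η², F₃₁ = η(u_x − v_x), F₁₂ = (1/η)(v − u), F₂₂ = −1/η² − 2uv, F₃₂ = −(1/η)(u + v). Then on U the structure equations with δ = 1 hold: −∂_t F₁₁ + ∂_x F₁₂ = F₃₁F₂₂ − F₃₂F₂₁, −∂_t F₂₁ + ∂_x F₂₂ = F₁₁F₃₂ − F₁₂F₃₁,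 −∂_t F₃₁ + ∂_x F₃₂ = F₁₁F₂₂ − F₁₂F₂₁; hence this system describes pseudospherical surfaces with these associated functions. -/
open Real

/-!
Both sides of each structure equation are computed by the product rule from `u`, `v`, `u_x`,
`v_x`, `u_xt`, `v_xt`; substituting `u_xt`, `v_xt` from the system turns the three equations
into rational identities in `η`, which hold because `η ≠ 0`.
-/

theorem ContDiffOn.differentiableAt_pdx {U : Set (ℝ × ℝ)} {f : ℝ × ℝ → ℝ} {p : ℝ × ℝ}
    {n : WithTop ℕ∞} (hf : ContDiffOn ℝ n f U) (hn : 2 ≤ n) (hU : IsOpen U) (hp : p ∈ U) :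
    DifferentiableAt ℝ (pdx f) p := by
  have hf' : ContDiffOn ℝ 1 (fderiv ℝ f) U :=
    hf.fderiv_of_isOpen hU (by simpa [one_add_one_eq_two] using hn)
  exact ((hf'.clm_apply contDiffOn_const).contDiffAt (hU.mem_nhds hp)).differentiableAt
    one_ne_zero

section PartialDerivatives

variable {f g : ℝ × ℝ → ℝ} {p : ℝ × ℝ}

theorem pdx_const (c : ℝ) : pdx (fun _ => c) p = 0 := by
  simp [pdx]

theorem pdx_add (hf : DifferentiableAt ℝ f p) (hg : DifferentiableAt ℝ g p) :
    pdx (fun q => f q + g q) p = pdx f p + pdx g p := by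
  simp [pdx, fderiv_fun_add hf hg]

theorem pdx_sub (hf : DifferentiableAt ℝ f p) (hg : DifferentiableAt ℝ g p) :
    pdx (fun q => f q - g q) p = pdx f p - pdx g p := by
  simp [pdx, fderiv_fun_sub hf hg]

theorem pdx_const_mul (c : ℝ) (hf : DifferentiableAt ℝ f p) :
    pdx (fun q => c * f q) p = c * pdx f p := by
  simp [pdx, fderiv_const_mul hf]

theorem pdx_mul (hf : DifferentiableAt ℝ f p) (hg : DifferentiableAt ℝ g p) :
    pdx (fun q => f q * g q) p = pdx f p * g p + f p * pdx g p := by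
  simp [pdx, fderiv_fun_mul hf hg]
  ring

theorem pdt_const (c : ℝ) : pdt (fun _ => c) p = 0 := by
  simp [pdt]

theorem pdt_add (hf : DifferentiableAt ℝ f p) (hg : DifferentiableAt ℝ g p) :
    pdt (fun q => f q + g q) p = pdt f p + pdt g p := by
  simp [pdt, fderiv_fun_add hf hg]

theorem pdt_sub (hf : DifferentiableAt ℝ f p) (hg : DifferentiableAt ℝ g p) :
    pdt (fun q => f q - g q) p = pdt f p - pdt g p := by
  simp [pdt, fderiv_fun_sub hf hg]

theorem pdt_const_mul (c : ℝ) (hf : DifferentiableAt ℝ f p) :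
    pdt (fun q => c * f q) p = c * pdt f p := by
  simp [pdt, fderiv_const_mul hf]

end PartialDerivatives

/-- The Pohlmeyer–Lund–Regge type system `u_xt = 2uv·u_x − u`, `v_xt = −2uv·v_x − v`
describes pseudospherical surfaces. -/
theorem plr_describes_pss (η : ℝ) (hη : η ≠ 0) (U : Set (ℝ × ℝ)) (hU : IsOpen U)
    (u v : ℝ × ℝ → ℝ)
    (hu : ContDiffOn ℝ (⊤ : ℕ∞) u U) (hv : ContDiffOn ℝ (⊤ : ℕ∞) v U)
    (heq1 : ∀ p ∈ U, pdt (pdx u) p = 2 * u p * v p * pdx u p - u p)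
    (heq2 : ∀ p ∈ U, pdt (pdx v) p = -(2 * u p * v p) * pdx v p - v p) :
    StructEqs 1 U
      (fun q => η * (pdx u q + pdx v q))
      (fun q => 1 / η * (v q - u q))
      (fun _ => η ^ 2)
      (fun q => -(1 / η ^ 2) - 2 * u q * v q)
      (fun q => η * (pdx u q - pdx v q))
      (fun q => -(1 / η) * (u q + v q)) := by
  intro p hp
  have hup : DifferentiableAt ℝ u p := (hu.contDiffAt (hU.mem_nhds hp)).differentiableAt (by simp)
  have hvp : DifferentiableAt ℝ v p := (hv.contDiffAt (hU.mem_nhds hp)).differentiableAt (by simp)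
  have h2 : (2 : WithTop ℕ∞) ≤ (⊤ : ℕ∞) := WithTop.coe_le_coe.mpr le_top
  have huxp : DifferentiableAt ℝ (pdx u) p := hu.differentiableAt_pdx h2 hU hp
  have hvxp : DifferentiableAt ℝ (pdx v) p := hv.differentiableAt_pdx h2 hU hp
  simp (disch := fun_prop) only [pdx_const, pdx_add, pdx_sub, pdx_const_mul, pdx_mul, pdt_const,
    pdt_add, pdt_sub, pdt_const_mul, heq1 p hp, heq2 p hp]
  refine ⟨?_, ?_, ?_⟩ <;> field_simp <;> ring
end

section
/- Let k₀, k₁, k₂, k₃, a, b, θ ∈ ℝ with k₀ab ≠ 0, let η ∈ ℝ with η ≠ 0, and set ψ(u,v) = k₀( (cosθ/(2ab))(a²u² − b²v²) + uv·sinθ ) − ab(k₁u + k₂v + k₃). Let u, v : U → ℝ be smooth functions on an open set U ⊆ ℝ² satisfying the 7-parameter system u_{xt} = ab·sinθ·[u_x·ψ(u,v) − k₂] − b²·cosθ·[v_x·ψ(u,v) + k₁] + k₀u, v_{xt} = −a²·cosθ·[u_x·ψ(u,v) − k₂] − ab·sinθ·[v_x·ψ(u,v) + k₁] + k₀v on U.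 Define F₁₁ = η[a·sin(θ/2)·u_x − b·cos(θ/2)·v_x], F₁₂ = (1/η)[b·cos(θ/2)·ψ_u(u,v) + a·sin(θ/2)·ψ_v(u,v)], F₂₁ = η², F₂₂ = k₀/η² − ab·ψ(u,v), F₃₁ = η[a·cos(θ/2)·u_x + b·sin(θ/2)·v_x], F₃₂ = (1/η)[−b·sin(θ/2)·ψ_u(u,v) + a·cos(θ/2)·ψ_v(u,v)]. Then on U the structure equations with δ = 1 hold: −∂_t F₁₁ + ∂_x F₁₂ = F₃₁F₂₂ − F₃₂F₂₁, −∂_t F₂₁ + ∂_x F₂₂ = F₁₁F₃₂ − F₁₂F₃₁, −∂_t F₃₁ + ∂_x F₃₂ = F₁₁F₂₂ − F₁₂F₂₁; hence this 7-parameter system describes pseudospherical surfaces with these associated functions. -/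
/-!
Rotate the scaled unknowns `(a u, b v)` by the half angle:
`ξ = a cos(θ/2) u + b sin(θ/2) v`, `ζ = a sin(θ/2) u - b cos(θ/2) v`.
As `cos θ = cos²(θ/2) - sin²(θ/2)` and `sin θ = 2 sin(θ/2) cos(θ/2)`, the potential becomes
`Φ := a b ψ = k₀ (ξ² - ζ²) / 2 + l ξ - m ζ + const`, the system becomes
`ξ_xt = Φ ζ_x + ∂_ξ Φ`, `ζ_xt = Φ ξ_x - ∂_ζ Φ`, and the associated functions become
`F₁₁ = η ζ_x`, `F₃₁ = η ξ_x`, `F₁₂ = ∂_ξ Φ / η`, `F₃₂ = -∂_ζ Φ / η`, `F₂₂ = k₀ / η² - Φ`.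
In this normal form the first and third structure equations are the two equations of the
system, and the second is the chain rule for `Φ`.
-/

open Real

/-- Partial derivative of a function of two real variables with respect to the first variable. -/
noncomputable def d1 (f : ℝ × ℝ → ℝ) (q : ℝ × ℝ) : ℝ := fderiv ℝ f q (1, 0)

/-- Partial derivative of a function of two real variables with respect to the second variable. -/
noncomputable def d2 (f : ℝ × ℝ → ℝ) (q : ℝ × ℝ) : ℝ := fderiv ℝ f q (0, 1)

def bivariateQuadratic (A B C D E F : ℝ) (w : ℝ × ℝ) : ℝ :=
  A * w.1 ^ 2 + B * w.1 * w.2 + C * w.2 ^ 2 + D * w.1 + E * w.2 + F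

theorem hasFDerivAt_bivariateQuadratic (A B C D E F : ℝ) (w : ℝ × ℝ) :
    HasFDerivAt (bivariateQuadratic A B C D E F)
      ((2 * A * w.1 + B * w.2 + D) • ContinuousLinearMap.fst ℝ ℝ ℝ
        + (B * w.1 + 2 * C * w.2 + E) • ContinuousLinearMap.snd ℝ ℝ ℝ) w := by
  have h₁ : HasFDerivAt (fun w : ℝ × ℝ => w.1) (ContinuousLinearMap.fst ℝ ℝ ℝ) w :=
    hasFDerivAt_fst
  have h₂ : HasFDerivAt (fun w : ℝ × ℝ => w.2) (ContinuousLinearMap.snd ℝ ℝ ℝ) w :=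
    hasFDerivAt_snd
  refine ((((((h₁.pow 2).const_mul A).fun_add ((h₁.const_mul B).fun_mul h₂)).fun_add
    ((h₂.pow 2).const_mul C)).fun_add (h₁.const_mul D)).fun_add (h₂.const_mul E)
    |>.add_const F).congr_fderiv ?_
  ext <;> simp <;> ring

theorem d1_bivariateQuadratic (A B C D E F : ℝ) (w : ℝ × ℝ) :
    d1 (bivariateQuadratic A B C D E F) w = 2 * A * w.1 + B * w.2 + D := by
  simp [d1, (hasFDerivAt_bivariateQuadratic A B C D E F w).fderiv]

theorem d2_bivariateQuadratic (A B C D E F : ℝ) (w : ℝ × ℝ) :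
    d2 (bivariateQuadratic A B C D E F) w = B * w.1 + 2 * C * w.2 + E := by
  simp [d2, (hasFDerivAt_bivariateQuadratic A B C D E F w).fderiv]

theorem fderiv_comp_prodMk_apply {g f₁ f₂ : ℝ × ℝ → ℝ} {p : ℝ × ℝ}
    (hg : DifferentiableAt ℝ g (f₁ p, f₂ p)) (h₁ : DifferentiableAt ℝ f₁ p)
    (h₂ : DifferentiableAt ℝ f₂ p) (e : ℝ × ℝ) :
    fderiv ℝ (fun q => g (f₁ q, f₂ q)) p e =
      d1 g (f₁ p, f₂ p) * fderiv ℝ f₁ p e + d2 g (f₁ p, f₂ p) * fderiv ℝ f₂ p e := by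
  have hpair : (fderiv ℝ f₁ p e, fderiv ℝ f₂ p e)
      = fderiv ℝ f₁ p e • ((1 : ℝ), (0 : ℝ)) + fderiv ℝ f₂ p e • ((0 : ℝ), (1 : ℝ)) := by
    simp
  rw [fderiv_fun_comp p hg (h₁.prodMk h₂), DifferentiableAt.fderiv_prodMk h₁ h₂]
  simp only [ContinuousLinearMap.comp_apply, ContinuousLinearMap.prod_apply, hpair, map_add,
    map_smul, d1, d2, smul_eq_mul]
  ring

theorem fderiv_clm_comp_prodMk_apply (L : ℝ × ℝ →L[ℝ] ℝ) {f₁ f₂ : ℝ × ℝ → ℝ} {p : ℝ × ℝ}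
    (h₁ : DifferentiableAt ℝ f₁ p) (h₂ : DifferentiableAt ℝ f₂ p) (e : ℝ × ℝ) :
    fderiv ℝ (fun q => L (f₁ q, f₂ q)) p e = L (fderiv ℝ f₁ p e, fderiv ℝ f₂ p e) := by
  rw [fderiv_fun_comp p L.differentiableAt (h₁.prodMk h₂), L.fderiv,
    DifferentiableAt.fderiv_prodMk h₁ h₂]
  rfl

theorem ContDiffAt.differentiableAt_fderiv_apply {f : ℝ × ℝ → ℝ} {p : ℝ × ℝ}
    (hf : ContDiffAt ℝ 2 f p) (e : ℝ × ℝ) : DifferentiableAt ℝ (fun q => fderiv ℝ f q e) p :=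
  ((hf.fderiv_right (m := 1) le_rfl).clm_apply contDiffAt_const).differentiableAt one_ne_zero

noncomputable def normalPotential (k0 l m ν : ℝ) : ℝ × ℝ → ℝ :=
  bivariateQuadratic (k0 / 2) 0 (-(k0 / 2)) l (-m) ν

theorem structEqs_one_of_normalForm {U : Set (ℝ × ℝ)} {η k0 l m ν : ℝ} (hη : η ≠ 0)
    {ξ ζ X Z : ℝ × ℝ → ℝ}
    (hξ : ∀ p ∈ U, DifferentiableAt ℝ ξ p) (hζ : ∀ p ∈ U, DifferentiableAt ℝ ζ p)
    (hX : ∀ p ∈ U, DifferentiableAt ℝ X p) (hZ : ∀ p ∈ U, DifferentiableAt ℝ Z p)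
    (hξx : ∀ p ∈ U, pdx ξ p = X p) (hζx : ∀ p ∈ U, pdx ζ p = Z p)
    (hXt : ∀ p ∈ U, pdt X p = normalPotential k0 l m ν (ξ p, ζ p) * Z p + k0 * ξ p + l)
    (hZt : ∀ p ∈ U, pdt Z p = normalPotential k0 l m ν (ξ p, ζ p) * X p + k0 * ζ p + m) :
    StructEqs 1 U (fun q => η * Z q) (fun q => 1 / η * (k0 * ξ q + l)) (fun _ => η ^ 2)
      (fun q => k0 / η ^ 2 - normalPotential k0 l m ν (ξ q, ζ q)) (fun q => η * X q)
      (fun q => 1 / η * (k0 * ζ q + m)) := by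
  intro p hp
  have hΦx : pdx (fun q => normalPotential k0 l m ν (ξ q, ζ q)) p
      = (k0 * ξ p + l) * X p - (k0 * ζ p + m) * Z p := by
    rw [normalPotential, pdx, fderiv_comp_prodMk_apply
      (hasFDerivAt_bivariateQuadratic ..).differentiableAt (hξ p hp) (hζ p hp),
      d1_bivariateQuadratic, d2_bivariateQuadratic, ← pdx, ← pdx, hξx p hp, hζx p hp]
    ring
  have hF12x : pdx (fun q => 1 / η * (k0 * ξ q + l)) p = 1 / η * (k0 * X p) := by
    simp [pdx, fderiv_const_mul, hξ p hp, ← hξx p hp]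
  have hF32x : pdx (fun q => 1 / η * (k0 * ζ q + m)) p = 1 / η * (k0 * Z p) := by
    simp [pdx, fderiv_const_mul, hζ p hp, ← hζx p hp]
  have hF22x : pdx (fun q => k0 / η ^ 2 - normalPotential k0 l m ν (ξ q, ζ q)) p
      = -pdx (fun q => normalPotential k0 l m ν (ξ q, ζ q)) p := by
    simp [pdx, fderiv_const_sub]
  have hF21t : pdt (fun _ => η ^ 2) p = 0 := by
    simp [pdt]
  have hF11t : pdt (fun q => η * Z q) p = η * pdt Z p := by
    simp [pdt, fderiv_const_mul, hZ p hp]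
  have hF31t : pdt (fun q => η * X q) p = η * pdt X p := by
    simp [pdt, fderiv_const_mul, hX p hp]
  refine ⟨?_, ?_, ?_⟩
  · rw [hF11t, hF12x, hZt p hp]
    field_simp
    ring
  · rw [hF21t, hF22x, hΦx]
    field_simp
    ring
  · rw [hF31t, hF32x, hXt p hp]
    field_simp
    ring

theorem cos_mul_cos_half_add_sin_mul_sin_half (θ : ℝ) :
    cos θ * cos (θ / 2) + sin θ * sin (θ / 2) = cos (θ / 2) := by
  rw [← cos_sub, sub_half]

theorem sin_mul_cos_half_sub_cos_mul_sin_half (θ : ℝ) :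
    sin θ * cos (θ / 2) - cos θ * sin (θ / 2) = sin (θ / 2) := by
  rw [← sin_sub, sub_half]

/-- `rotXi a b θ` and `rotZeta a b θ` give the coordinates `ξ` and `ζ` of the header. -/
noncomputable def rotXi (a b θ : ℝ) : ℝ × ℝ →L[ℝ] ℝ :=
  (a * cos (θ / 2)) • ContinuousLinearMap.fst ℝ ℝ ℝ
    + (b * sin (θ / 2)) • ContinuousLinearMap.snd ℝ ℝ ℝ

noncomputable def rotZeta (a b θ : ℝ) : ℝ × ℝ →L[ℝ] ℝ :=
  (a * sin (θ / 2)) • ContinuousLinearMap.fst ℝ ℝ ℝ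
    - (b * cos (θ / 2)) • ContinuousLinearMap.snd ℝ ℝ ℝ

@[simp] theorem rotXi_apply (a b θ : ℝ) (w : ℝ × ℝ) :
    rotXi a b θ w = a * cos (θ / 2) * w.1 + b * sin (θ / 2) * w.2 := by
  simp [rotXi]

@[simp] theorem rotZeta_apply (a b θ : ℝ) (w : ℝ × ℝ) :
    rotZeta a b θ w = a * sin (θ / 2) * w.1 - b * cos (θ / 2) * w.2 := by
  simp [rotZeta]

noncomputable def sevenParamPotential (k0 k1 k2 k3 a b θ : ℝ) (w : ℝ × ℝ) : ℝ :=
  k0 * (cos θ / (2 * a * b) * (a ^ 2 * w.1 ^ 2 - b ^ 2 * w.2 ^ 2) + w.1 * w.2 * sin θ)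
    - a * b * (k1 * w.1 + k2 * w.2 + k3)

section SevenParameter

variable {k0 k1 k2 k3 a b θ : ℝ}

theorem sevenParamPotential_eq_bivariateQuadratic :
    sevenParamPotential k0 k1 k2 k3 a b θ
      = bivariateQuadratic (k0 * (cos θ / (2 * a * b)) * a ^ 2) (k0 * sin θ)
          (-(k0 * (cos θ / (2 * a * b)) * b ^ 2)) (-(a * b * k1)) (-(a * b * k2))
          (-(a * b * k3)) := by
  funext w
  rw [sevenParamPotential, bivariateQuadratic]
  ring

theorem mul_d1_sevenParamPotential (hb : b ≠ 0) (w : ℝ × ℝ) :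
    b * d1 (sevenParamPotential k0 k1 k2 k3 a b θ) w
      = k0 * (a * cos θ * w.1 + b * sin θ * w.2) - a * b ^ 2 * k1 := by
  rw [sevenParamPotential_eq_bivariateQuadratic, d1_bivariateQuadratic]
  field_simp
  ring

theorem mul_d2_sevenParamPotential (ha : a ≠ 0) (w : ℝ × ℝ) :
    a * d2 (sevenParamPotential k0 k1 k2 k3 a b θ) w
      = k0 * (a * sin θ * w.1 - b * cos θ * w.2) - a ^ 2 * b * k2 := by
  rw [sevenParamPotential_eq_bivariateQuadratic, d2_bivariateQuadratic]
  field_simp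
  ring

theorem rotXi_grad_sevenParamPotential (ha : a ≠ 0) (hb : b ≠ 0) (w : ℝ × ℝ) :
    b * cos (θ / 2) * d1 (sevenParamPotential k0 k1 k2 k3 a b θ) w
        + a * sin (θ / 2) * d2 (sevenParamPotential k0 k1 k2 k3 a b θ) w
      = k0 * rotXi a b θ w - a * b * rotXi b a θ (k1, k2) := by
  simp only [rotXi_apply]
  have h₁ := mul_d1_sevenParamPotential (k0 := k0) (k1 := k1) (k2 := k2) (k3 := k3) (a := a)
    (θ := θ) hb w
  have h₂ := mul_d2_sevenParamPotential (k0 := k0) (k1 := k1) (k2 := k2) (k3 := k3) (b := b)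
    (θ := θ) ha w
  linear_combination cos (θ / 2) * h₁ + sin (θ / 2) * h₂
    + k0 * a * w.1 * cos_mul_cos_half_add_sin_mul_sin_half θ
    + k0 * b * w.2 * sin_mul_cos_half_sub_cos_mul_sin_half θ

theorem rotZeta_grad_sevenParamPotential (ha : a ≠ 0) (hb : b ≠ 0) (w : ℝ × ℝ) :
    -(b * sin (θ / 2)) * d1 (sevenParamPotential k0 k1 k2 k3 a b θ) w
        + a * cos (θ / 2) * d2 (sevenParamPotential k0 k1 k2 k3 a b θ) w
      = k0 * rotZeta a b θ w + a * b * rotZeta b a θ (k1, k2) := by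
  simp only [rotZeta_apply]
  have h₁ := mul_d1_sevenParamPotential (k0 := k0) (k1 := k1) (k2 := k2) (k3 := k3) (a := a)
    (θ := θ) hb w
  have h₂ := mul_d2_sevenParamPotential (k0 := k0) (k1 := k1) (k2 := k2) (k3 := k3) (b := b)
    (θ := θ) ha w
  linear_combination -sin (θ / 2) * h₁ + cos (θ / 2) * h₂
    + k0 * a * w.1 * sin_mul_cos_half_sub_cos_mul_sin_half θ
    - k0 * b * w.2 * cos_mul_cos_half_add_sin_mul_sin_half θ

theorem mul_sevenParamPotential_eq_normalPotential (ha : a ≠ 0) (hb : b ≠ 0) (w : ℝ × ℝ) :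
    a * b * sevenParamPotential k0 k1 k2 k3 a b θ w
      = normalPotential k0 (-(a * b * rotXi b a θ (k1, k2))) (a * b * rotZeta b a θ (k1, k2))
          (-(a ^ 2 * b ^ 2 * k3)) (rotXi a b θ w, rotZeta a b θ w) := by
  have hcos : cos θ = cos (θ / 2) ^ 2 - sin (θ / 2) ^ 2 := by
    rw [← cos_two_mul', mul_div_cancel₀ θ two_ne_zero]
  have hsin : sin θ = 2 * sin (θ / 2) * cos (θ / 2) := by
    rw [← sin_two_mul, mul_div_cancel₀ θ two_ne_zero]
  have hscaled : a * b * sevenParamPotential k0 k1 k2 k3 a b θ w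
      = k0 / 2 * (cos θ * (a ^ 2 * w.1 ^ 2 - b ^ 2 * w.2 ^ 2) + 2 * a * b * sin θ * w.1 * w.2)
        - a ^ 2 * b ^ 2 * (k1 * w.1 + k2 * w.2 + k3) := by
    rw [sevenParamPotential]
    field_simp
  rw [hscaled, normalPotential, bivariateQuadratic]
  simp only [rotXi_apply, rotZeta_apply]
  linear_combination k0 / 2 * (a ^ 2 * w.1 ^ 2 - b ^ 2 * w.2 ^ 2) * hcos
    + k0 * a * b * w.1 * w.2 * hsin
    + a ^ 2 * b ^ 2 * (k1 * w.1 + k2 * w.2) * sin_sq_add_cos_sq (θ / 2)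

theorem rotXi_sevenParamSystem {P u v ux vx uxt vxt : ℝ}
    (h₁ : uxt = a * b * sin θ * (ux * P - k2) - b ^ 2 * cos θ * (vx * P + k1) + k0 * u)
    (h₂ : vxt = -(a ^ 2) * cos θ * (ux * P - k2) - a * b * sin θ * (vx * P + k1) + k0 * v) :
    rotXi a b θ (uxt, vxt) = a * b * P * rotZeta a b θ (ux, vx) + k0 * rotXi a b θ (u, v)
      - a * b * rotXi b a θ (k1, k2) := by
  simp only [rotXi_apply, rotZeta_apply]
  linear_combination a * cos (θ / 2) * h₁ + b * sin (θ / 2) * h₂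
    + (a ^ 2 * b * P * ux - a ^ 2 * b * k2) * sin_mul_cos_half_sub_cos_mul_sin_half θ
    - (a * b ^ 2 * P * vx + a * b ^ 2 * k1) * cos_mul_cos_half_add_sin_mul_sin_half θ

theorem rotZeta_sevenParamSystem {P u v ux vx uxt vxt : ℝ}
    (h₁ : uxt = a * b * sin θ * (ux * P - k2) - b ^ 2 * cos θ * (vx * P + k1) + k0 * u)
    (h₂ : vxt = -(a ^ 2) * cos θ * (ux * P - k2) - a * b * sin θ * (vx * P + k1) + k0 * v) :
    rotZeta a b θ (uxt, vxt) = a * b * P * rotXi a b θ (ux, vx) + k0 * rotZeta a b θ (u, v)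
      + a * b * rotZeta b a θ (k1, k2) := by
  simp only [rotXi_apply, rotZeta_apply]
  linear_combination a * sin (θ / 2) * h₁ - b * cos (θ / 2) * h₂
    + (a ^ 2 * b * P * ux - a ^ 2 * b * k2) * cos_mul_cos_half_add_sin_mul_sin_half θ
    + (a * b ^ 2 * P * vx + a * b ^ 2 * k1) * sin_mul_cos_half_sub_cos_mul_sin_half θ

end SevenParameter

/-- The 7-parameter system (38) describes pseudospherical surfaces. -/
theorem seven_param_system_describes_pss (k0 k1 k2 k3 a b θ η : ℝ)
    (hk : k0 * a * b ≠ 0) (hη : η ≠ 0)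
    (ψ : ℝ × ℝ → ℝ)
    (hψ : ∀ w : ℝ × ℝ,
      ψ w = k0 * (Real.cos θ / (2 * a * b) * (a ^ 2 * w.1 ^ 2 - b ^ 2 * w.2 ^ 2)
              + w.1 * w.2 * Real.sin θ) - a * b * (k1 * w.1 + k2 * w.2 + k3))
    (U : Set (ℝ × ℝ)) (hU : IsOpen U)
    (u v : ℝ × ℝ → ℝ)
    (hu : ContDiffOn ℝ (⊤ : ℕ∞) u U) (hv : ContDiffOn ℝ (⊤ : ℕ∞) v U)
    (heq1 : ∀ p ∈ U, pdt (pdx u) p =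
      a * b * Real.sin θ * (pdx u p * ψ (u p, v p) - k2)
        - b ^ 2 * Real.cos θ * (pdx v p * ψ (u p, v p) + k1) + k0 * u p)
    (heq2 : ∀ p ∈ U, pdt (pdx v) p =
      -(a ^ 2) * Real.cos θ * (pdx u p * ψ (u p, v p) - k2)
        - a * b * Real.sin θ * (pdx v p * ψ (u p, v p) + k1) + k0 * v p) :
    StructEqs 1 U
      (fun q => η * (a * Real.sin (θ / 2) * pdx u q - b * Real.cos (θ / 2) * pdx v q))
      (fun q => 1 / η * (b * Real.cos (θ / 2) * d1 ψ (u q, v q)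
                  + a * Real.sin (θ / 2) * d2 ψ (u q, v q)))
      (fun _ => η ^ 2)
      (fun q => k0 / η ^ 2 - a * b * ψ (u q, v q))
      (fun q => η * (a * Real.cos (θ / 2) * pdx u q + b * Real.sin (θ / 2) * pdx v q))
      (fun q => 1 / η * (-(b * Real.sin (θ / 2)) * d1 ψ (u q, v q)
                  + a * Real.cos (θ / 2) * d2 ψ (u q, v q))) := by
  obtain rfl : ψ = sevenParamPotential k0 k1 k2 k3 a b θ := funext hψ
  have ha : a ≠ 0 := by rintro rfl; simp at hk
  have hb : b ≠ 0 := by rintro rfl; simp at hk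
  have hC2 : ∀ p ∈ U, ContDiffAt ℝ 2 u p ∧ ContDiffAt ℝ 2 v p := fun p hp =>
    ⟨(hu.contDiffAt (hU.mem_nhds hp)).of_le (WithTop.coe_le_coe.2 le_top),
      (hv.contDiffAt (hU.mem_nhds hp)).of_le (WithTop.coe_le_coe.2 le_top)⟩
  have hu' : ∀ p ∈ U, DifferentiableAt ℝ u p := fun p hp =>
    (hC2 p hp).1.differentiableAt two_ne_zero
  have hv' : ∀ p ∈ U, DifferentiableAt ℝ v p := fun p hp =>
    (hC2 p hp).2.differentiableAt two_ne_zero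
  have hux' : ∀ p ∈ U, DifferentiableAt ℝ (pdx u) p := fun p hp =>
    (hC2 p hp).1.differentiableAt_fderiv_apply _
  have hvx' : ∀ p ∈ U, DifferentiableAt ℝ (pdx v) p := fun p hp =>
    (hC2 p hp).2.differentiableAt_fderiv_apply _
  convert structEqs_one_of_normalForm hη (ν := -(a ^ 2 * b ^ 2 * k3))
    (ξ := fun q => rotXi a b θ (u q, v q)) (ζ := fun q => rotZeta a b θ (u q, v q))
    (X := fun q => rotXi a b θ (pdx u q, pdx v q))
    (Z := fun q => rotZeta a b θ (pdx u q, pdx v q))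
    (fun p hp => by fun_prop (disch := simp_all)) (fun p hp => by fun_prop (disch := simp_all))
    (fun p hp => by fun_prop (disch := simp_all)) (fun p hp => by fun_prop (disch := simp_all))
    (fun p hp => fderiv_clm_comp_prodMk_apply _ (hu' p hp) (hv' p hp) _)
    (fun p hp => fderiv_clm_comp_prodMk_apply _ (hu' p hp) (hv' p hp) _)
    (fun p hp => by
      rw [pdt, fderiv_clm_comp_prodMk_apply _ (hux' p hp) (hvx' p hp), ← pdt, ← pdt,
        rotXi_sevenParamSystem (heq1 p hp) (heq2 p hp),
        ← mul_sevenParamPotential_eq_normalPotential ha hb]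
      ring)
    (fun p hp => by
      rw [pdt, fderiv_clm_comp_prodMk_apply _ (hux' p hp) (hvx' p hp), ← pdt, ← pdt,
        rotZeta_sevenParamSystem (heq1 p hp) (heq2 p hp),
        ← mul_sevenParamPotential_eq_normalPotential ha hb])
    using 2
  · simp
  · rw [rotXi_grad_sevenParamPotential ha hb, sub_eq_add_neg]
  · rw [mul_sevenParamPotential_eq_normalPotential ha hb]
  · simp
  · rw [rotZeta_grad_sevenParamPotential ha hb]
end
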